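/- Let {f̂(n)}_{n≥0} ∈ GBV and {f̂(n) + f̂(−n)}_{n≥1} ∈ GBV, and suppose the series f(x) = Σ_{n=−∞}^{∞} f̂(n)e^{inx} converges at every x to a continuous function f ∈ C_{2π}. Then there exists C > 0 such that for all sufficiently large n: sup_{k≥2n+1} k·|f̂(k)| ≤ C·( max_{1≤k≤n} k·|f̂(n+k)| + sup_{k≥2n+1} k·|f̂(k) − f̂(−k)| + Σ_{k=2n+1}^{∞} |f̂(k) + f̂(−k)| ). -/

import Mathlib

/-!
Write `c_j = f̂(j)`, `e_j = f̂(-j)`, and `A`, `B`, `D` for the three terms on the right.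
Telescoping the GBV variation bound gives `|c_k| ≤ (1 + M) Σ_{m ≤ i < m + N} |c_i|` whenever
`m ≤ k ≤ 2m + 1`. For `k ≲ 4n` one such window sits inside `(n, 2n]`, where
`|c_j| ≤ A / (j - n) ≲ A / n`. For larger `k`, stacking `≈ k / 2N` disjoint windows in
`[k/2, k)` gives `k |c_k| ≲ N (1 + M) Σ_{k/2 ≤ j < k} |c_j|`. At most `N` of these indices lie
in `(n, 2n]`, each contributing at most `A`; beyond `2n`, `2|c_j| ≤ |c_j + e_j| + |c_j - e_j|`
with `|c_j - e_j| ≤ B / j ≤ 2B / k`, so the remaining sum is at most `B + D`.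
-/

open Filter Complex Real
open scoped ENNReal NNReal

noncomputable section

/-- `K(θ) = {z ∈ ℂ : |arg z| ≤ θ}`. -/
def Kset (θ : ℝ) : Set ℂ := {z : ℂ | |Complex.arg z| ≤ θ}

/-- The class GBV: `c_n ∈ K(θ₁)` for some `θ₁ ∈ [0, π/2)` and all `n ≥ 1`, and
`Σ_{n=m}^{2m} |Δc_n| ≤ M · max_{m ≤ n < m+N₀} |c_n|` for all `m ≥ 1`. -/
def GBV (c : ℕ → ℂ) : Prop :=
  (∃ θ₁ : ℝ, 0 ≤ θ₁ ∧ θ₁ < Real.pi / 2 ∧ ∀ n, 1 ≤ n → c n ∈ Kset θ₁) ∧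
  (∃ N₀ : ℕ, 1 ≤ N₀ ∧ ∃ M : ℝ, 0 < M ∧ ∀ m, 1 ≤ m →
    (∑ n ∈ Finset.Icc m (2 * m), ‖c n - c (n + 1)‖) ≤
      M * ⨆ n ∈ Finset.Ico m (m + N₀), ‖c n‖)

lemma mul_sum_le_card_mul {ι : Type*} (S : Finset ι) {f : ι → ℝ} {s a : ℝ}
    (h : ∀ j ∈ S, s * f j ≤ a) : s * ∑ j ∈ S, f j ≤ S.card * a := by
  rw [Finset.mul_sum]
  simpa using Finset.sum_le_card_nsmul S _ a h

lemma ofReal_natCast_mul_norm {E : Type*} [SeminormedAddGroup E] (t : ℕ) (x : E) :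
    ENNReal.ofReal (t * ‖x‖) = (t : ℝ≥0∞) * (‖x‖₊ : ℝ≥0∞) := by
  rw [ENNReal.ofReal_mul (Nat.cast_nonneg t), ENNReal.ofReal_natCast, ofReal_norm]
  rfl

section TailEstimates

variable {E : Type*} [SeminormedAddCommGroup E] {c e : ℕ → E} {n : ℕ} {a b d : ℝ}

lemma mul_sum_norm_Ico_le_of_middle
    (hmid : ∀ t : ℕ, 1 ≤ t → t ≤ n → (t : ℝ) * ‖c (n + t)‖ ≤ a)
    {s p q : ℕ} (hs : 1 ≤ s) (hp : n + s ≤ p) (hq : q ≤ 2 * n + 1) :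
    (s : ℝ) * ∑ j ∈ Finset.Ico p q, ‖c j‖ ≤ (q - p : ℕ) * a := by
  refine (mul_sum_le_card_mul _ fun j hj => ?_).trans_eq (by rw [Nat.card_Ico])
  rw [Finset.mem_Ico] at hj
  have ht := hmid (j - n) (by omega) (by omega)
  rw [show n + (j - n) = j by omega] at ht
  calc (s : ℝ) * ‖c j‖ ≤ (j - n : ℕ) * ‖c j‖ := by gcongr; omega
    _ ≤ a := ht

lemma two_mul_sum_norm_Ico_le_of_tail [NormedSpace ℝ E]
    (hodd : ∀ j : ℕ, 2 * n + 1 ≤ j → (j : ℝ) * ‖c j - e j‖ ≤ b)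
    (heven : ∀ K : ℕ, ∑ j ∈ Finset.Ico (2 * n + 1) K, ‖c j + e j‖ ≤ d)
    {m p k : ℕ} (hm : 1 ≤ m) (hmp : m ≤ p) (hp : 2 * n + 1 ≤ p) (hk : k ≤ 2 * m + 1) :
    2 * ∑ j ∈ Finset.Ico p k, ‖c j‖ ≤ 2 * b + d := by
  have hb : 0 ≤ b := (by positivity : (0 : ℝ) ≤ p * ‖c p - e p‖).trans (hodd p hp)
  have hm' : (0 : ℝ) < m := by exact_mod_cast hm
  have hplus : ∑ j ∈ Finset.Ico p k, ‖c j + e j‖ ≤ d :=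
    (Finset.sum_le_sum_of_subset_of_nonneg (Finset.Ico_subset_Ico hp le_rfl)
      fun _ _ _ => norm_nonneg _).trans (heven k)
  have hminus : ∑ j ∈ Finset.Ico p k, ‖c j - e j‖ ≤ 2 * b := by
    refine le_of_mul_le_mul_left ?_ hm'
    calc (m : ℝ) * ∑ j ∈ Finset.Ico p k, ‖c j - e j‖ ≤ (k - p : ℕ) * b := by
          refine (mul_sum_le_card_mul _ fun j hj => ?_).trans_eq (by rw [Nat.card_Ico])
          rw [Finset.mem_Ico] at hj
          calc (m : ℝ) * ‖c j - e j‖ ≤ j * ‖c j - e j‖ := by gcongr; omega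
            _ ≤ b := hodd j (by omega)
      _ ≤ (2 * m : ℕ) * b := by gcongr; omega
      _ = m * (2 * b) := by push_cast; ring
  have hsplit : ∀ j, 2 * ‖c j‖ ≤ ‖c j + e j‖ + ‖c j - e j‖ := fun j => by
    have h2 : (c j + e j) + (c j - e j) = (2 : ℝ) • c j := by rw [two_smul]; abel
    have := norm_add_le (c j + e j) (c j - e j)
    rwa [h2, norm_smul, Real.norm_two] at this
  calc 2 * ∑ j ∈ Finset.Ico p k, ‖c j‖
      ≤ ∑ j ∈ Finset.Ico p k, (‖c j + e j‖ + ‖c j - e j‖) := by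
        rw [Finset.mul_sum]; exact Finset.sum_le_sum fun j _ => hsplit j
    _ ≤ d + 2 * b := by rw [Finset.sum_add_distrib]; exact add_le_add hplus hminus
    _ = 2 * b + d := add_comm _ _

end TailEstimates

/-- The variation half of the class GBV, with window length `N` and constant `M`. -/
def WindowVariationBound {E : Type*} [SeminormedAddCommGroup E]
    (c : ℕ → E) (N : ℕ) (M : ℝ) : Prop :=
  ∀ m, 1 ≤ m → (∑ i ∈ Finset.Icc m (2 * m), ‖c i - c (i + 1)‖) ≤
    M * ⨆ i ∈ Finset.Ico m (m + N), ‖c i‖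

namespace WindowVariationBound

variable {E : Type*} [SeminormedAddCommGroup E] {c e : ℕ → E} {N n k : ℕ} {M a b d : ℝ}

lemma norm_le_sum_window (h : WindowVariationBound c N M) (hN : 1 ≤ N) (hM : 0 ≤ M)
    {m : ℕ} (hm : 1 ≤ m) (hmk : m ≤ k) (hk : k ≤ 2 * m + 1) :
    ‖c k‖ ≤ (1 + M) * ∑ i ∈ Finset.Ico m (m + N), ‖c i‖ := by
  set W := ∑ i ∈ Finset.Ico m (m + N), ‖c i‖
  have hW : 0 ≤ W := Finset.sum_nonneg fun _ _ => norm_nonneg _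
  have hcm : ‖c m‖ ≤ W :=
    Finset.single_le_sum (fun _ _ => norm_nonneg _) (by simp only [Finset.mem_Ico]; omega)
  have hsup : (⨆ i ∈ Finset.Ico m (m + N), ‖c i‖) ≤ W :=
    Real.iSup_le (fun i => Real.iSup_le
      (fun hi => Finset.single_le_sum (fun _ _ => norm_nonneg _) hi) hW) hW
  have hdiff : ‖c k - c m‖ ≤ ∑ i ∈ Finset.Icc m (2 * m), ‖c i - c (i + 1)‖ := by
    rw [norm_sub_rev]
    simp only [← dist_eq_norm]
    refine (dist_le_Ico_sum_dist c hmk).trans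
      (Finset.sum_le_sum_of_subset_of_nonneg ?_ fun _ _ _ => dist_nonneg)
    intro i
    simp only [Finset.mem_Ico, Finset.mem_Icc]
    omega
  calc ‖c k‖ ≤ ‖c m‖ + ‖c k - c m‖ := norm_le_norm_add_norm_sub' _ _
    _ ≤ W + M * W :=
      add_le_add hcm (hdiff.trans ((h m hm).trans (mul_le_mul_of_nonneg_left hsup hM)))
    _ = (1 + M) * W := by ring

lemma mul_norm_le_sum (h : WindowVariationBound c N M) (hN : 1 ≤ N) (hM : 0 ≤ M)
    {m : ℕ} (hm : 1 ≤ m) (hk : k ≤ 2 * m + 1) :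
    ∀ T : ℕ, m + T * N ≤ k →
      T * ‖c k‖ ≤ (1 + M) * ∑ i ∈ Finset.Ico m (m + T * N), ‖c i‖
  | 0, _ => by simp
  | T + 1, hT => by
    have ih := mul_norm_le_sum h hN hM hm hk T (by nlinarith)
    have hwin := h.norm_le_sum_window hN hM (m := m + T * N) (k := k) (by omega)
      (by nlinarith) (by omega)
    rw [show m + (T + 1) * N = m + T * N + N by ring,
      ← Finset.sum_Ico_consecutive _ (by omega : m ≤ m + T * N) (by omega)]
    push_cast
    linarith

lemma mul_norm_le_of_near (h : WindowVariationBound c N M) (hN : 1 ≤ N) (hM : 0 ≤ M)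
    (hn : 2 * N + 1 ≤ n) (hk : 2 * n + 1 ≤ k) (hk' : k ≤ 4 * n - 2 * N + 1)
    (hmid : ∀ t : ℕ, 1 ≤ t → t ≤ n → (t : ℝ) * ‖c (n + t)‖ ≤ a) :
    (k : ℝ) * ‖c k‖ ≤ 8 * N * (1 + M) * a := by
  set s := n - N
  set W := ∑ i ∈ Finset.Ico (n + s) (n + s + N), ‖c i‖
  have hwin : ‖c k‖ ≤ (1 + M) * W :=
    h.norm_le_sum_window hN hM (by omega) (by omega) (by omega)
  have hlow : (s : ℝ) * W ≤ N * a := by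
    have := mul_sum_norm_Ico_le_of_middle hmid (s := s) (p := n + s) (q := n + s + N)
      (by omega) le_rfl (by omega)
    rwa [show n + s + N - (n + s) = N by omega] at this
  have hks : (k : ℝ) ≤ 8 * s := by exact_mod_cast (by omega : k ≤ 8 * s)
  calc (k : ℝ) * ‖c k‖ ≤ 8 * s * ((1 + M) * W) :=
        mul_le_mul hks hwin (norm_nonneg _) (by positivity)
    _ = 8 * (1 + M) * (s * W) := by ring
    _ ≤ 8 * (1 + M) * (N * a) := by gcongr
    _ = 8 * N * (1 + M) * a := by ring

lemma mul_norm_le_of_far [NormedSpace ℝ E] (h : WindowVariationBound c N M) (hN : 1 ≤ N)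
    (hM : 0 ≤ M) (hn : 2 * N + 1 ≤ n) (hk : 4 * n - 2 * N + 1 < k)
    (hmid : ∀ t : ℕ, 1 ≤ t → t ≤ n → (t : ℝ) * ‖c (n + t)‖ ≤ a)
    (hodd : ∀ j : ℕ, 2 * n + 1 ≤ j → (j : ℝ) * ‖c j - e j‖ ≤ b)
    (heven : ∀ K : ℕ, ∑ j ∈ Finset.Ico (2 * n + 1) K, ‖c j + e j‖ ≤ d) :
    (k : ℝ) * ‖c k‖ ≤ 2 * N * (1 + M) * (2 * N * a + 2 * b + d) := by
  obtain ⟨m, hm⟩ : ∃ m, m = k / 2 := ⟨_, rfl⟩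
  obtain ⟨T, r, hTr, hr⟩ : ∃ T r, T * N + r = k - m ∧ r < N :=
    ⟨_, _, Nat.div_add_mod' _ _, Nat.mod_lt _ (by omega)⟩
  obtain ⟨p, hmp, hnp, hpm, hp⟩ :
      ∃ p, m ≤ p ∧ 2 * n + 1 ≤ p ∧ p ≤ m + N ∧ (p = m ∨ p ≤ 2 * n + 1) :=
    ⟨max m (2 * n + 1), le_max_left _ _, le_max_right _ _, by omega, by omega⟩
  have ha : 0 ≤ a := (norm_nonneg _).trans (by simpa using hmid 1 le_rfl (by omega))
  have havg : T * ‖c k‖ ≤ (1 + M) * ∑ j ∈ Finset.Ico m k, ‖c j‖ := by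
    refine (h.mul_norm_le_sum hN hM (m := m) (by omega) (by omega) T (by omega)).trans ?_
    gcongr ?_ * ?_
    exact Finset.sum_le_sum_of_subset_of_nonneg (Finset.Ico_subset_Ico le_rfl (by omega))
      fun _ _ _ => norm_nonneg _
  have hlow : ∑ j ∈ Finset.Ico m p, ‖c j‖ ≤ N * a := by
    rcases hp with rfl | hp
    · simpa using mul_nonneg (Nat.cast_nonneg N) ha
    have := mul_sum_norm_Ico_le_of_middle hmid (s := 1) (p := m) (q := p) le_rfl (by omega) hp
    rw [Nat.cast_one, one_mul] at this
    exact this.trans (by gcongr; omega)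
  have hhigh := two_mul_sum_norm_Ico_le_of_tail hodd heven (m := m) (p := p) (k := k)
    (by omega) hmp hnp (by omega)
  have hsplit := Finset.sum_Ico_consecutive (fun j => ‖c j‖) hmp (by omega : p ≤ k)
  have hkT : (k : ℝ) ≤ 4 * N * T := by
    exact_mod_cast (by rw [mul_assoc, mul_comm N T]; omega : k ≤ 4 * N * T)
  calc (k : ℝ) * ‖c k‖ ≤ 4 * N * T * ‖c k‖ := by gcongr
    _ = 4 * N * (T * ‖c k‖) := by ring
    _ ≤ 4 * N * ((1 + M) * ∑ j ∈ Finset.Ico m k, ‖c j‖) := by gcongr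
    _ = 2 * N * (1 + M) * (2 * ∑ j ∈ Finset.Ico m k, ‖c j‖) := by ring
    _ ≤ 2 * N * (1 + M) * (2 * N * a + 2 * b + d) := by
        gcongr
        rw [← hsplit]
        linarith

lemma mul_norm_le [NormedSpace ℝ E] (h : WindowVariationBound c N M) (hN : 1 ≤ N)
    (hM : 0 ≤ M) (hn : 2 * N + 1 ≤ n) (hk : 2 * n + 1 ≤ k)
    (hmid : ∀ t : ℕ, 1 ≤ t → t ≤ n → (t : ℝ) * ‖c (n + t)‖ ≤ a)
    (hodd : ∀ j : ℕ, 2 * n + 1 ≤ j → (j : ℝ) * ‖c j - e j‖ ≤ b)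
    (heven : ∀ K : ℕ, ∑ j ∈ Finset.Ico (2 * n + 1) K, ‖c j + e j‖ ≤ d) :
    (k : ℝ) * ‖c k‖ ≤ 8 * N ^ 2 * (1 + M) * (a + b + d) := by
  have ha : 0 ≤ a := (norm_nonneg _).trans (by simpa using hmid 1 le_rfl (by omega))
  have hb : 0 ≤ b := (by positivity : (0 : ℝ) ≤ k * ‖c k - e k‖).trans (hodd k hk)
  have hd : 0 ≤ d := by simpa using heven 0
  have hN' : (1 : ℝ) ≤ N := by exact_mod_cast hN
  have hNabd : a + b + d ≤ N * (a + b + d) := le_mul_of_one_le_left (by positivity) hN'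
  rcases le_or_gt k (4 * n - 2 * N + 1) with hk' | hk'
  · calc (k : ℝ) * ‖c k‖ ≤ 8 * N * (1 + M) * a := h.mul_norm_le_of_near hN hM hn hk hk' hmid
      _ ≤ 8 * N * (1 + M) * (N * (a + b + d)) := by gcongr; linarith
      _ = 8 * N ^ 2 * (1 + M) * (a + b + d) := by ring
  · calc (k : ℝ) * ‖c k‖ ≤ 2 * N * (1 + M) * (2 * N * a + 2 * b + d) :=
          h.mul_norm_le_of_far hN hM hn hk' hmid hodd heven
      _ ≤ 2 * N * (1 + M) * (4 * (N * (a + b + d))) := by gcongr; nlinarith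
      _ = 8 * N ^ 2 * (1 + M) * (a + b + d) := by ring

theorem iSup_mul_nnnorm_le [NormedSpace ℝ E] (h : WindowVariationBound c N M) (hN : 1 ≤ N)
    (hM : 0 ≤ M) (hn : 2 * N + 1 ≤ n) :
    (⨆ k : ℕ, ⨆ _ : 2 * n + 1 ≤ k, (k : ℝ≥0∞) * (‖c k‖₊ : ℝ≥0∞))
      ≤ ENNReal.ofReal (8 * N ^ 2 * (1 + M)) *
        ((⨆ k ∈ Finset.Icc 1 n, (k : ℝ≥0∞) * (‖c (n + k)‖₊ : ℝ≥0∞))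
        + (⨆ k : ℕ, ⨆ _ : 2 * n + 1 ≤ k, (k : ℝ≥0∞) * (‖c k - e k‖₊ : ℝ≥0∞))
        + ∑' k : ℕ, (‖c (2 * n + 1 + k) + e (2 * n + 1 + k)‖₊ : ℝ≥0∞)) := by
  set A := ⨆ k ∈ Finset.Icc 1 n, (k : ℝ≥0∞) * (‖c (n + k)‖₊ : ℝ≥0∞)
  set B := ⨆ k : ℕ, ⨆ _ : 2 * n + 1 ≤ k, (k : ℝ≥0∞) * (‖c k - e k‖₊ : ℝ≥0∞)
  set D := ∑' k : ℕ, (‖c (2 * n + 1 + k) + e (2 * n + 1 + k)‖₊ : ℝ≥0∞)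
  have hC : 0 < 8 * (N : ℝ) ^ 2 * (1 + M) := by
    have : (1 : ℝ) ≤ N := by exact_mod_cast hN
    positivity
  rcases eq_or_ne (A + B + D) ⊤ with hABD | hABD
  · rw [hABD, ENNReal.mul_top (ENNReal.ofReal_pos.2 hC).ne']
    exact le_top
  obtain ⟨⟨hA, hB⟩, hD⟩ := ENNReal.add_ne_top.1 hABD |>.imp_left ENNReal.add_ne_top.1
  have hmid (t : ℕ) (h1t : 1 ≤ t) (htn : t ≤ n) : (t : ℝ) * ‖c (n + t)‖ ≤ A.toReal := by
    rw [← ENNReal.ofReal_le_iff_le_toReal hA, ofReal_natCast_mul_norm]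
    exact le_iSup₂ (f := fun k (_ : k ∈ Finset.Icc 1 n) => (k : ℝ≥0∞) * (‖c (n + k)‖₊ : ℝ≥0∞))
      t (Finset.mem_Icc.2 ⟨h1t, htn⟩)
  have hodd (j : ℕ) (hj : 2 * n + 1 ≤ j) : (j : ℝ) * ‖c j - e j‖ ≤ B.toReal := by
    rw [← ENNReal.ofReal_le_iff_le_toReal hB, ofReal_natCast_mul_norm]
    exact le_iSup₂ (f := fun k (_ : 2 * n + 1 ≤ k) => (k : ℝ≥0∞) * (‖c k - e k‖₊ : ℝ≥0∞)) j hj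
  have heven (K : ℕ) : ∑ j ∈ Finset.Ico (2 * n + 1) K, ‖c j + e j‖ ≤ D.toReal := by
    rw [← ENNReal.ofReal_le_iff_le_toReal hD,
      ENNReal.ofReal_sum_of_nonneg fun _ _ => norm_nonneg _, Finset.sum_Ico_eq_sum_range]
    simp only [ofReal_norm]
    exact ENNReal.sum_le_tsum _
  refine iSup₂_le fun k hk => ?_
  rw [← ofReal_natCast_mul_norm]
  calc ENNReal.ofReal (k * ‖c k‖)
      ≤ ENNReal.ofReal (8 * N ^ 2 * (1 + M) * (A.toReal + B.toReal + D.toReal)) :=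
        ENNReal.ofReal_le_ofReal (h.mul_norm_le hN hM hn hk hmid hodd heven)
    _ = ENNReal.ofReal (8 * N ^ 2 * (1 + M)) * (A + B + D) := by
        rw [ENNReal.ofReal_mul hC.le, ENNReal.ofReal_add (by positivity) (by positivity),
          ENNReal.ofReal_add (by positivity) (by positivity), ENNReal.ofReal_toReal hA,
          ENNReal.ofReal_toReal hB, ENNReal.ofReal_toReal hD]

end WindowVariationBound

theorem stmt_15_general (fhat : ℤ → ℂ)
    (h1 : GBV (fun n : ℕ => fhat (n : ℤ))) :
    ∃ C : ℝ≥0, 0 < C ∧ ∀ᶠ n : ℕ in Filter.atTop,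
      (⨆ k : ℕ, ⨆ _ : 2 * n + 1 ≤ k, (k : ℝ≥0∞) * (‖fhat (k : ℤ)‖₊ : ℝ≥0∞))
      ≤ (C : ℝ≥0∞) *
      ((⨆ k ∈ Finset.Icc 1 n, (k : ℝ≥0∞) * (‖fhat ((n : ℤ) + (k : ℤ))‖₊ : ℝ≥0∞))
      + (⨆ k : ℕ, ⨆ _ : 2 * n + 1 ≤ k, (k : ℝ≥0∞) *
          (‖fhat (k : ℤ) - fhat (-(k : ℤ))‖₊ : ℝ≥0∞))
      + (∑' k : ℕ, (‖fhat ((2 * n + 1 + k : ℕ) : ℤ) + fhat (-((2 * n + 1 + k : ℕ) : ℤ))‖₊ : ℝ≥0∞))) := by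
  obtain ⟨-, N, hN, M, hM, hvar⟩ := h1
  have hN' : (0 : ℝ) < N := by exact_mod_cast hN
  refine ⟨(8 * (N : ℝ) ^ 2 * (1 + M)).toNNReal, Real.toNNReal_pos.2 (by positivity), ?_⟩
  filter_upwards [eventually_ge_atTop (2 * N + 1)] with n hn
  have := WindowVariationBound.iSup_mul_nnnorm_le (e := fun k : ℕ => fhat (-(k : ℤ)))
    hvar hN hM.le hn
  exact_mod_cast this

/-- Under the GBV hypotheses with `f ∈ C_{2π}`, for all sufficiently large `n`:
`sup_{k≥2n+1} k|f̂(k)| ≤ C·(max_{1≤k≤n} k|f̂(n+k)| + sup_{k≥2n+1} k|f̂(k)−f̂(−k)|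
 + Σ_{k=2n+1}^∞ |f̂(k)+f̂(−k)|)` (suprema and the tail sum taken in `ℝ≥0∞`). -/
theorem stmt_15 (fhat : ℤ → ℂ) (f : ℝ → ℂ)
    (h1 : GBV (fun n : ℕ => fhat (n : ℤ)))
    (h2 : GBV (fun n : ℕ => fhat (n : ℤ) + fhat (-(n : ℤ))))
    (hconv : ∀ x : ℝ, Filter.Tendsto
      (fun N : ℕ => ∑ k ∈ Finset.Icc (-(N : ℤ)) (N : ℤ),
        fhat k * Complex.exp ((k : ℂ) * (x : ℂ) * Complex.I))
      Filter.atTop (nhds (f x)))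
    (hcont : Continuous f) :
    ∃ C : ℝ≥0, 0 < C ∧ ∀ᶠ n : ℕ in Filter.atTop,
      (⨆ k : ℕ, ⨆ _ : 2 * n + 1 ≤ k, (k : ℝ≥0∞) * (‖fhat (k : ℤ)‖₊ : ℝ≥0∞))
      ≤ (C : ℝ≥0∞) *
      ((⨆ k ∈ Finset.Icc 1 n, (k : ℝ≥0∞) * (‖fhat ((n : ℤ) + (k : ℤ))‖₊ : ℝ≥0∞))
      + (⨆ k : ℕ, ⨆ _ : 2 * n + 1 ≤ k, (k : ℝ≥0∞) *
          (‖fhat (k : ℤ) - fhat (-(k : ℤ))‖₊ : ℝ≥0∞))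
      + (∑' k : ℕ, (‖fhat ((2 * n + 1 + k : ℕ) : ℤ) + fhat (-((2 * n + 1 + k : ℕ) : ℤ))‖₊ : ℝ≥0∞))) :=
  stmt_15_general fhat h1
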